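/- arXiv:2512.24680 — 3 statements merged into one kernel-verified Lean document; each statement's English description precedes it below -/
import Mathlib

section
/- For a Gaussian mixture p(z) = Σᵢ wⁱ pᵢ(z) where each pᵢ(z) = N(z; μᵢ, Σ) is a multivariate Gaussian with common covariance Σ, the Hessian of g(z) = log p(z) equals p(z)⁻² Σᵢ Σⱼ χᵢχⱼ Σ⁻¹(μⱼ−μᵢ)μⱼᵀΣ⁻¹ − Σ⁻¹, where χᵢ = wⁱ pᵢ(z). -/
open Matrix MeasureTheory

/-- Density of the multivariate Gaussian `N(μ, S)` on `ℝᵐ`. -/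
noncomputable def gaussPdf {m : ℕ} (μ : Fin m → ℝ) (S : Matrix (Fin m) (Fin m) ℝ)
    (z : Fin m → ℝ) : ℝ :=
  (Real.sqrt ((2 * Real.pi) ^ m * S.det))⁻¹ *
    Real.exp (-(1 / 2) * ((z - μ) ⬝ᵥ (S⁻¹ *ᵥ (z - μ))))

/-!
The weighted components `χᵢ = wⁱ N(·; μᵢ, Σ)` have gradient `-χᵢ Σ⁻¹(z - μᵢ)` and Hessian
`χᵢ (Σ⁻¹(z - μᵢ)(z - μᵢ)ᵀΣ⁻¹ - Σ⁻¹)`. Inserting these into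
`∇² log p = ∇²p / p - ∇p ∇pᵀ / p²`, the `-Σ⁻¹` terms add up to `-Σ⁻¹`, and what remains is
`p⁻²` times the `χ`-weighted covariance `p Σᵢ χᵢ aᵢaᵢᵀ - (Σᵢ χᵢ aᵢ)(Σᵢ χᵢ aᵢ)ᵀ` of the vectors
`aᵢ = Σ⁻¹z - Σ⁻¹μᵢ`. That covariance equals `Σᵢ Σⱼ χᵢχⱼ Σ⁻¹(μⱼ - μᵢ)(Σ⁻¹μⱼ)ᵀ`: the common shift
`Σ⁻¹z` drops out because `Σᵢ Σⱼ χᵢχⱼ (μⱼ - μᵢ) = 0` by antisymmetry.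
-/

theorem Matrix.IsSymm.dotProduct_mulVec_comm {n : Type*} [Fintype n] {A : Matrix n n ℝ}
    (hA : A.IsSymm) (x y : n → ℝ) : x ⬝ᵥ (A *ᵥ y) = (A *ᵥ x) ⬝ᵥ y := by
  rw [dotProduct_mulVec, ← mulVec_transpose, hA.eq]

section DotProduct
variable {n : Type*} [Fintype n]

noncomputable def dotProductCLM : (n → ℝ) →L[ℝ] (n → ℝ) →L[ℝ] ℝ :=
  LinearMap.toContinuousLinearMap
    (LinearMap.toContinuousLinearMap.toLinearMap ∘ₗ dotProductBilin ℝ ℝ)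

@[simp]
theorem dotProductCLM_apply (x y : n → ℝ) : dotProductCLM x y = x ⬝ᵥ y := rfl

noncomputable def mulVecCLM (A : Matrix n n ℝ) : (n → ℝ) →L[ℝ] (n → ℝ) :=
  LinearMap.toContinuousLinearMap A.mulVecLin

@[simp]
theorem mulVecCLM_apply (A : Matrix n n ℝ) (x : n → ℝ) : mulVecCLM A x = A *ᵥ x := rfl

theorem HasFDerivAt.dotProduct {E : Type*} [NormedAddCommGroup E] [NormedSpace ℝ E]
    {f g : E → n → ℝ} {f' g' : E →L[ℝ] n → ℝ} {x : E}
    (hf : HasFDerivAt f f' x) (hg : HasFDerivAt g g' x) :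
    HasFDerivAt (fun y => f y ⬝ᵥ g y)
      (dotProductCLM (f x) ∘L g' + dotProductCLM (g x) ∘L f') x := by
  refine (dotProductCLM.hasFDerivAt_of_bilinear hf hg).congr_fderiv ?_
  ext u
  simp [dotProduct_comm]

end DotProduct

open Filter Topology in
theorem iteratedFDeriv_two_log_apply {E : Type*} [NormedAddCommGroup E] [NormedSpace ℝ E]
    {f : E → ℝ} {z : E} (hf : ContDiffAt ℝ 2 f z) (hz : f z ≠ 0) (u v : E) :
    iteratedFDeriv ℝ 2 (fun y => Real.log (f y)) z ![u, v] =
      iteratedFDeriv ℝ 2 f z ![u, v] / f z - fderiv ℝ f z u * fderiv ℝ f z v / f z ^ 2 := by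
  have hlog : fderiv ℝ (fun y => Real.log (f y)) =ᶠ[𝓝 z] fun y => (f y)⁻¹ • fderiv ℝ f y := by
    filter_upwards [hf.eventually (by simp), hf.continuousAt.eventually_ne hz] with y hy hy0
    exact ((hy.differentiableAt (by simp)).hasFDerivAt.log hy0).fderiv
  have hinv : HasFDerivAt (fun y => (f y)⁻¹) (-(f z ^ 2)⁻¹ • fderiv ℝ f z) z :=
    (hasDerivAt_inv hz).comp_hasFDerivAt z (hf.differentiableAt (by simp)).hasFDerivAt
  have hf' : DifferentiableAt ℝ (fderiv ℝ f) z :=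
    (hf.fderiv_right (m := 1) le_rfl).differentiableAt one_ne_zero
  simp only [iteratedFDeriv_two_apply, Matrix.cons_val_zero, Matrix.cons_val_one]
  rw [hlog.fderiv_eq, (hinv.fun_smul hf'.hasFDerivAt).fderiv]
  simp only [_root_.add_apply, _root_.smul_apply, ContinuousLinearMap.smulRight_apply,
    smul_eq_mul]
  field_simp
  ring

theorem Finset.sum_mul_sum_sub_sum_mul_sum {ι : Type*} (s : Finset ι) (χ x y : ι → ℝ)
    (c d : ℝ) :
    (∑ i ∈ s, χ i) * ∑ i ∈ s, χ i * ((c - x i) * (d - y i)) -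
        (∑ i ∈ s, χ i * (c - x i)) * ∑ i ∈ s, χ i * (d - y i) =
      ∑ i ∈ s, ∑ j ∈ s, χ i * χ j * ((x j - x i) * y j) := by
  have hanti : ∑ i ∈ s, ∑ j ∈ s, χ i * χ j * (x j - x i) = 0 := by
    have h : ∑ i ∈ s, ∑ j ∈ s, χ i * χ j * (x j - x i) =
        (∑ i ∈ s, χ i) * (∑ i ∈ s, χ i * x i) - (∑ i ∈ s, χ i * x i) * ∑ i ∈ s, χ i := by
      simp only [Finset.sum_mul_sum, ← Finset.sum_sub_distrib]
      exact Finset.sum_congr rfl fun i _ => Finset.sum_congr rfl fun j _ => by ring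
    rw [h, mul_comm, sub_self]
  calc _ = ∑ i ∈ s, ∑ j ∈ s,
          (χ i * χ j * ((x j - x i) * y j) - d * (χ i * χ j * (x j - x i))) := by
        simp only [Finset.sum_mul_sum, ← Finset.sum_sub_distrib]
        exact Finset.sum_congr rfl fun i _ => Finset.sum_congr rfl fun j _ => by ring
    _ = _ := by simp only [Finset.sum_sub_distrib, ← Finset.mul_sum, hanti, mul_zero, sub_zero]

section Gaussian
variable {m : ℕ} {S : Matrix (Fin m) (Fin m) ℝ}

theorem gaussPdf_pos (hS : 0 < S.det) (μ z : Fin m → ℝ) : 0 < gaussPdf μ S z :=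
  mul_pos (inv_pos.2 (Real.sqrt_pos.2 (mul_pos (by positivity) hS))) (Real.exp_pos _)

theorem contDiff_gaussPdf (μ : Fin m → ℝ) (S : Matrix (Fin m) (Fin m) ℝ) {n : WithTop ℕ∞} :
    ContDiff ℝ n (gaussPdf μ S) := by
  unfold gaussPdf
  simp only [dotProduct, mulVec]
  fun_prop

theorem hasFDerivAt_gaussPdf (hS : S.IsSymm) (μ z : Fin m → ℝ) :
    HasFDerivAt (gaussPdf μ S) (-gaussPdf μ S z • dotProductCLM (S⁻¹ *ᵥ (z - μ))) z := by
  have hd : HasFDerivAt (fun y => y - μ) (ContinuousLinearMap.id ℝ _) z :=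
    (hasFDerivAt_id z).sub_const μ
  have hq := hd.dotProduct ((mulVecCLM S⁻¹).hasFDerivAt.comp z hd)
  refine ((hq.const_mul _).exp.const_mul _).congr_fderiv ?_
  ext u
  simp only [gaussPdf, _root_.smul_apply, _root_.add_apply, ContinuousLinearMap.comp_apply,
    ContinuousLinearMap.id_apply, Function.comp_apply, dotProductCLM_apply, mulVecCLM_apply,
    smul_eq_mul]
  rw [hS.inv.dotProduct_mulVec_comm (z - μ) u]
  ring

theorem fderiv_gaussPdf (hS : S.IsSymm) (μ : Fin m → ℝ) :
    fderiv ℝ (gaussPdf μ S) = fun y => -gaussPdf μ S y • dotProductCLM (S⁻¹ *ᵥ (y - μ)) :=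
  funext fun y => (hasFDerivAt_gaussPdf hS μ y).fderiv

theorem iteratedFDeriv_two_gaussPdf_apply (hS : S.IsSymm) (μ z u v : Fin m → ℝ) :
    iteratedFDeriv ℝ 2 (gaussPdf μ S) z ![u, v] = gaussPdf μ S z *
      ((S⁻¹ *ᵥ (z - μ)) ⬝ᵥ u * (S⁻¹ *ᵥ (z - μ)) ⬝ᵥ v - (S⁻¹ *ᵥ u) ⬝ᵥ v) := by
  have hd : HasFDerivAt (fun y => S⁻¹ *ᵥ (y - μ)) (mulVecCLM S⁻¹) z := by
    simpa using (mulVecCLM S⁻¹).hasFDerivAt.comp z ((hasFDerivAt_id z).sub_const μ)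
  have h2 : HasFDerivAt (fun y => -gaussPdf μ S y • dotProductCLM (S⁻¹ *ᵥ (y - μ))) _ z :=
    (hasFDerivAt_gaussPdf hS μ z).neg.fun_smul (dotProductCLM.hasFDerivAt.comp z hd)
  simp only [iteratedFDeriv_two_apply, Matrix.cons_val_zero, Matrix.cons_val_one,
    fderiv_gaussPdf hS]
  rw [h2.fderiv]
  simp only [_root_.smul_apply, _root_.add_apply, ContinuousLinearMap.comp_apply,
    ContinuousLinearMap.smulRight_apply, _root_.neg_apply, Pi.neg_apply, dotProductCLM_apply,
    mulVecCLM_apply, smul_eq_mul]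
  ring

end Gaussian

section Mixture
variable {m : ℕ} {ι : Type*} [Fintype ι]

noncomputable def gaussMixture (w : ι → ℝ) (μ : ι → Fin m → ℝ) (S : Matrix (Fin m) (Fin m) ℝ)
    (z : Fin m → ℝ) : ℝ :=
  ∑ i, w i * gaussPdf (μ i) S z

variable (w : ι → ℝ) (μ : ι → Fin m → ℝ) {S : Matrix (Fin m) (Fin m) ℝ}

theorem gaussMixture_pos [Nonempty ι] (hw : ∀ i, 0 < w i) (hS : 0 < S.det) (z : Fin m → ℝ) :
    0 < gaussMixture w μ S z :=
  Finset.sum_pos (fun i _ => mul_pos (hw i) (gaussPdf_pos hS (μ i) z)) Finset.univ_nonempty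

theorem contDiff_gaussMixture {n : WithTop ℕ∞} : ContDiff ℝ n (gaussMixture w μ S) :=
  ContDiff.sum fun i _ => contDiff_const.mul (contDiff_gaussPdf (μ i) S)

theorem fderiv_gaussMixture_apply (hS : S.IsSymm) (z u : Fin m → ℝ) :
    fderiv ℝ (gaussMixture w μ S) z u =
      -∑ i, w i * gaussPdf (μ i) S z * (S⁻¹ *ᵥ (z - μ i)) ⬝ᵥ u := by
  have h : HasFDerivAt (gaussMixture w μ S) _ z :=
    HasFDerivAt.fun_sum fun i _ => (hasFDerivAt_gaussPdf hS (μ i) z).const_mul (w i)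
  rw [h.fderiv]
  simp [Finset.sum_neg_distrib, mul_assoc]

theorem iteratedFDeriv_two_gaussMixture_apply (hS : S.IsSymm) (z u v : Fin m → ℝ) :
    iteratedFDeriv ℝ 2 (gaussMixture w μ S) z ![u, v] = ∑ i, w i * gaussPdf (μ i) S z *
      ((S⁻¹ *ᵥ (z - μ i)) ⬝ᵥ u * (S⁻¹ *ᵥ (z - μ i)) ⬝ᵥ v - (S⁻¹ *ᵥ u) ⬝ᵥ v) := by
  have h : gaussMixture w μ S = ∑ i, w i • gaussPdf (μ i) S := by
    ext y
    simp [gaussMixture]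
  rw [h, iteratedFDeriv_sum_apply (f := fun i => w i • gaussPdf (μ i) S)
    fun i _ => ((contDiff_gaussPdf (μ i) S).const_smul (w i)).contDiffAt]
  simp [iteratedFDeriv_const_smul_apply (contDiff_gaussPdf (μ _) S).contDiffAt,
    iteratedFDeriv_two_gaussPdf_apply hS, mul_assoc]

theorem iteratedFDeriv_two_log_gaussMixture_apply (hS : S.IsSymm) (z : Fin m → ℝ)
    (hz : gaussMixture w μ S z ≠ 0) (u v : Fin m → ℝ) :
    iteratedFDeriv ℝ 2 (fun y => Real.log (gaussMixture w μ S y)) z ![u, v] =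
      (gaussMixture w μ S z ^ 2)⁻¹ * ∑ i, ∑ j,
          w i * gaussPdf (μ i) S z * (w j * gaussPdf (μ j) S z) *
            ((S⁻¹ *ᵥ (μ j - μ i)) ⬝ᵥ u * (S⁻¹ *ᵥ μ j) ⬝ᵥ v) - (S⁻¹ *ᵥ u) ⬝ᵥ v := by
  rw [iteratedFDeriv_two_log_apply (contDiff_gaussMixture w μ).contDiffAt hz,
    iteratedFDeriv_two_gaussMixture_apply w μ hS, fderiv_gaussMixture_apply w μ hS,
    fderiv_gaussMixture_apply w μ hS]
  simp only [mulVec_sub, sub_dotProduct]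
  rw [← Finset.sum_mul_sum_sub_sum_mul_sum]
  unfold gaussMixture at hz ⊢
  simp only [mul_sub (w _ * _ : ℝ), Finset.sum_sub_distrib, ← Finset.sum_mul, neg_mul_neg]
  field_simp
  ring

end Mixture

/-- For a Gaussian mixture `p(z) = Σᵢ wⁱ N(z; μᵢ, Σ)` with positive weights
summing to `1` and common positive-definite covariance `Σ`, the Hessian of `g(z) = log p(z)`
equals `p(z)⁻² Σᵢ Σⱼ χᵢχⱼ Σ⁻¹(μⱼ−μᵢ)μⱼᵀΣ⁻¹ − Σ⁻¹`, where `χᵢ = wⁱ N(z; μᵢ, Σ)`. -/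
theorem gmm_log_hessian {m N : ℕ} (w : Fin N → ℝ) (μ : Fin N → Fin m → ℝ)
    (S : Matrix (Fin m) (Fin m) ℝ) (hw : ∀ i, 0 < w i) (hsum : ∑ i, w i = 1)
    (hS : S.PosDef) (z : Fin m → ℝ)
    (p : (Fin m → ℝ) → ℝ) (hp : p = fun z => ∑ i, w i * gaussPdf (μ i) S z)
    (χ : Fin N → ℝ) (hχ : χ = fun i => w i * gaussPdf (μ i) S z) :
    (Matrix.of fun a b : Fin m =>
        iteratedFDeriv ℝ 2 (fun z => Real.log (p z)) z ![Pi.single a 1, Pi.single b 1]) =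
      ((p z) ^ 2)⁻¹ •
          (∑ i, ∑ j, (χ i * χ j) • (S⁻¹ * vecMulVec (μ j - μ i) (μ j) * S⁻¹)) - S⁻¹ := by
  obtain rfl : p = gaussMixture w μ S := hp
  subst hχ
  have hsymm : S.IsSymm := isHermitian_iff_isSymm.mp hS.isHermitian
  have : Nonempty (Fin N) :=
    Finset.univ_nonempty_iff.mp (Finset.nonempty_of_sum_ne_zero (hsum ▸ one_ne_zero))
  ext a b
  rw [of_apply, iteratedFDeriv_two_log_gaussMixture_apply w μ hsymm z
    (gaussMixture_pos w μ hw hS.det_pos z).ne']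
  simp only [Matrix.sub_apply, Matrix.smul_apply, Matrix.sum_apply, mul_vecMulVec, vecMulVec_mul,
    vecMulVec_apply, ← mulVec_transpose, hsymm.inv.eq, dotProduct_single, mulVec_single_one,
    mul_one, smul_eq_mul, Finset.mul_sum, col_apply, hsymm.inv.apply a b]
end

section
/- Let G(z) = p(z)⁻² Σᵢ Σⱼ χᵢ(z)χⱼ(z) Σ⁻¹(μⱼ−μᵢ)μⱼᵀΣ⁻¹ be the Gaussian-mixture correction matrix, where χᵢ(z) = wⁱ N(z; μᵢ, Σ). Then G(z) can be rewritten as the symmetric form G(z) = p(z)⁻² Σᵢ Σ_{j>i} χᵢχⱼ Σ⁻¹(μⱼ−μᵢ)(μⱼ−μᵢ)ᵀΣ⁻¹, and in particular G(z) is positive semidefinite. -/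
/-!
The diagonal terms of the double sum vanish, and the `(i, j)` and `(j, i)` terms combine because
`(μⱼ - μᵢ) μⱼᵀ + (μᵢ - μⱼ) μᵢᵀ = (μⱼ - μᵢ)(μⱼ - μᵢ)ᵀ`. Each term of the resulting sum over
`i < j` is a nonnegative multiple of `S⁻¹ v vᵀ S⁻¹`, a congruence of a rank-one positive
semidefinite matrix by the symmetric matrix `S⁻¹`.
-/

open Matrix MeasureTheory

theorem gaussPdf_nonneg {m : ℕ} (μ : Fin m → ℝ) (S : Matrix (Fin m) (Fin m) ℝ)
    (z : Fin m → ℝ) : 0 ≤ gaussPdf μ S z := by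
  unfold gaussPdf; positivity

theorem Finset.sum_sum_eq_sum_sum_lt_add_swap {ι M : Type*} [Fintype ι] [LinearOrder ι]
    [AddCommMonoid M] (F : ι → ι → M) (hdiag : ∀ i, F i i = 0) :
    ∑ i, ∑ j, F i j = ∑ i, ∑ j ∈ univ.filter (fun j => i < j), (F i j + F j i) := by
  calc ∑ i, ∑ j, F i j
      = ∑ i, ∑ j, ((if i < j then F i j else 0) + if j < i then F i j else 0) := by
        refine sum_congr rfl fun i _ => sum_congr rfl fun j _ => ?_
        rcases lt_trichotomy i j with h | rfl | h
        · simp [h, h.not_gt]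
        · simp [hdiag]
        · simp [h, h.not_gt]
    _ = ∑ i, ∑ j, if i < j then F i j + F j i else 0 := by
        simp only [sum_add_distrib]
        rw [sum_comm (f := fun i j => if j < i then F i j else 0), ← sum_add_distrib]
        refine sum_congr rfl fun i _ => ?_
        rw [← sum_add_distrib]
        exact sum_congr rfl fun j _ => by split_ifs <;> simp
    _ = _ := by simp only [sum_filter]

theorem Matrix.vecMulVec_sub_add_vecMulVec_sub {n R : Type*} [CommRing R] (a b : n → R) :
    vecMulVec (a - b) a + vecMulVec (b - a) b = vecMulVec (a - b) (a - b) := by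
  ext i j; simp only [add_apply, vecMulVec_apply, Pi.sub_apply]; ring

theorem Matrix.IsHermitian.posSemidef_mul_vecMulVec_self_mul {n R : Type*} [Fintype n]
    [CommRing R] [PartialOrder R] [StarRing R] [StarOrderedRing R] [TrivialStar R]
    {A : Matrix n n R} (hA : A.IsHermitian) (v : n → R) :
    (A * vecMulVec v v * A).PosSemidef := by
  have h := (posSemidef_vecMulVec_self_star v).mul_mul_conjTranspose_same A
  rwa [star_trivial, hA.eq] at h

section Correction

variable {ι n R : Type*} [Fintype ι] [LinearOrder ι] [Fintype n]

theorem sum_sum_smul_vecMulVec_sub_eq_sum_sum_lt [CommRing R] (c : ι → R) (μ : ι → n → R)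
    (A : Matrix n n R) :
    ∑ i, ∑ j, (c i * c j) • (A * vecMulVec (μ j - μ i) (μ j) * A) =
      ∑ i, ∑ j ∈ Finset.univ.filter (fun j => i < j),
        (c i * c j) • (A * vecMulVec (μ j - μ i) (μ j - μ i) * A) := by
  rw [Finset.sum_sum_eq_sum_sum_lt_add_swap _ fun i => by simp]
  refine Finset.sum_congr rfl fun i _ => Finset.sum_congr rfl fun j _ => ?_
  rw [mul_comm (c j), ← smul_add, ← add_mul, ← mul_add, vecMulVec_sub_add_vecMulVec_sub]

theorem posSemidef_sum_sum_lt_smul_vecMulVec_sub [CommRing R] [PartialOrder R] [IsOrderedRing R]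
    [StarRing R] [StarOrderedRing R] [TrivialStar R] {c : ι → R} (hc : ∀ i, 0 ≤ c i)
    (μ : ι → n → R) {A : Matrix n n R} (hA : A.IsHermitian) :
    (∑ i, ∑ j ∈ Finset.univ.filter (fun j => i < j),
        (c i * c j) • (A * vecMulVec (μ j - μ i) (μ j - μ i) * A)).PosSemidef :=
  posSemidef_sum _ fun i _ => posSemidef_sum _ fun j _ =>
    (hA.posSemidef_mul_vecMulVec_self_mul _).smul (mul_nonneg (hc i) (hc j))

end Correction

theorem gmm_correction_symmetric_posSemidef_general {m N : ℕ} (w : Fin N → ℝ)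
    (μ : Fin N → Fin m → ℝ) (S : Matrix (Fin m) (Fin m) ℝ)
    (hw : ∀ i, 0 < w i) (hS : S.PosDef) (z : Fin m → ℝ)
    (p : (Fin m → ℝ) → ℝ)
    (χ : Fin N → ℝ) (hχ : χ = fun i => w i * gaussPdf (μ i) S z)
    (G : Matrix (Fin m) (Fin m) ℝ)
    (hG : G = ((p z) ^ 2)⁻¹ •
        ∑ i, ∑ j, (χ i * χ j) • (S⁻¹ * vecMulVec (μ j - μ i) (μ j) * S⁻¹)) :
    G = ((p z) ^ 2)⁻¹ •
        ∑ i, ∑ j ∈ Finset.univ.filter (fun j => i < j),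
          (χ i * χ j) • (S⁻¹ * vecMulVec (μ j - μ i) (μ j - μ i) * S⁻¹) ∧
      G.PosSemidef := by
  rw [sum_sum_smul_vecMulVec_sub_eq_sum_sum_lt] at hG
  have hχ_nonneg : ∀ i, 0 ≤ χ i := fun i => hχ ▸ mul_nonneg (hw i).le (gaussPdf_nonneg _ _ _)
  refine ⟨hG, hG ▸ ?_⟩
  exact (posSemidef_sum_sum_lt_smul_vecMulVec_sub hχ_nonneg μ hS.isHermitian.inv).smul
    (by positivity)

/-- The Gaussian-mixture correction matrix
`G(z) = p(z)⁻² Σᵢ Σⱼ χᵢχⱼ Σ⁻¹(μⱼ−μᵢ)μⱼᵀΣ⁻¹` can be rewritten in the symmetric form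
`G(z) = p(z)⁻² Σᵢ Σ_{j>i} χᵢχⱼ Σ⁻¹(μⱼ−μᵢ)(μⱼ−μᵢ)ᵀΣ⁻¹`, and in particular `G(z)` is
positive semidefinite. -/
theorem gmm_correction_symmetric_posSemidef {m N : ℕ} (w : Fin N → ℝ)
    (μ : Fin N → Fin m → ℝ) (S : Matrix (Fin m) (Fin m) ℝ)
    (hw : ∀ i, 0 < w i) (hsum : ∑ i, w i = 1) (hS : S.PosDef) (z : Fin m → ℝ)
    (p : (Fin m → ℝ) → ℝ) (hp : p = fun z => ∑ i, w i * gaussPdf (μ i) S z)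
    (χ : Fin N → ℝ) (hχ : χ = fun i => w i * gaussPdf (μ i) S z)
    (G : Matrix (Fin m) (Fin m) ℝ)
    (hG : G = ((p z) ^ 2)⁻¹ •
        ∑ i, ∑ j, (χ i * χ j) • (S⁻¹ * vecMulVec (μ j - μ i) (μ j) * S⁻¹)) :
    G = ((p z) ^ 2)⁻¹ •
        ∑ i, ∑ j ∈ Finset.univ.filter (fun j => i < j),
          (χ i * χ j) • (S⁻¹ * vecMulVec (μ j - μ i) (μ j - μ i) * S⁻¹) ∧
      G.PosSemidef :=
  gmm_correction_symmetric_posSemidef_general w μ S hw hS z p χ hχ G hG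
end

section
/- Suppose ‖Σ⁻¹(μⱼ−μᵢ)‖² ≤ c for all pairs i,j. Then for all x ∈ ℝᵐ, the quadratic form of the matrix G(z) = p(z)⁻² Σᵢ Σ_{j>i} χᵢχⱼ vᵢⱼvᵢⱼᵀ (with vᵢⱼ = Σ⁻¹(μⱼ−μᵢ)) satisfies 0 ≤ xᵀG(z)x ≤ c xᵀx, hence |xᵀG(z)x| ≤ c‖x‖². -/
open Matrix MeasureTheory


lemma dot_sum_mulVec' {m : ℕ} {ι : Type*} (s : Finset ι) (A : ι → Matrix (Fin m) (Fin m) ℝ)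
    (x : Fin m → ℝ) :
    x ⬝ᵥ ((∑ i ∈ s, A i) *ᵥ x) = ∑ i ∈ s, x ⬝ᵥ (A i *ᵥ x) := by
  induction s using Finset.cons_induction with
  | empty => simp
  | cons a s ha ih => simp [Finset.sum_cons, Matrix.add_mulVec, dotProduct_add, ih]

lemma dot_vecMulVec' (m : ℕ) (u x : Fin m → ℝ) :
    x ⬝ᵥ ((vecMulVec u u) *ᵥ x) = (u ⬝ᵥ x) ^ 2 := by
  rw [pow_two]
  simp only [dotProduct]
  rw [Finset.sum_mul_sum]
  simp only [mulVec, dotProduct, vecMulVec_apply, Finset.mul_sum]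
  exact Finset.sum_congr rfl fun a _ => Finset.sum_congr rfl fun b _ => by ring

/-- Suppose `‖Σ⁻¹(μⱼ−μᵢ)‖² ≤ c` for all pairs `i, j`. Then for all
`x ∈ ℝᵐ`, the quadratic form of `G(z) = p(z)⁻² Σᵢ Σ_{j>i} χᵢχⱼ vᵢⱼvᵢⱼᵀ`
(with `vᵢⱼ = Σ⁻¹(μⱼ−μᵢ)`) satisfies `0 ≤ xᵀG(z)x ≤ c xᵀx`, hence `|xᵀG(z)x| ≤ c‖x‖²`. -/
theorem gmm_correction_quadform_bound {m N : ℕ} (w : Fin N → ℝ)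
    (μ : Fin N → Fin m → ℝ) (S : Matrix (Fin m) (Fin m) ℝ)
    (hw : ∀ i, 0 < w i) (hsum : ∑ i, w i = 1) (hS : S.PosDef) (z : Fin m → ℝ)
    (p : (Fin m → ℝ) → ℝ) (hp : p = fun z => ∑ i, w i * gaussPdf (μ i) S z)
    (χ : Fin N → ℝ) (hχ : χ = fun i => w i * gaussPdf (μ i) S z)
    (v : Fin N → Fin N → Fin m → ℝ) (hv : v = fun i j => S⁻¹ *ᵥ (μ j - μ i))
    (c : ℝ) (hc : 0 < c) (hbound : ∀ i j, v i j ⬝ᵥ v i j ≤ c)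
    (G : Matrix (Fin m) (Fin m) ℝ)
    (hG : G = ((p z) ^ 2)⁻¹ •
        ∑ i, ∑ j ∈ Finset.univ.filter (fun j => i < j),
          (χ i * χ j) • vecMulVec (v i j) (v i j))
    (x : Fin m → ℝ) :
    (0 ≤ x ⬝ᵥ (G *ᵥ x) ∧ x ⬝ᵥ (G *ᵥ x) ≤ c * (x ⬝ᵥ x)) ∧
      |x ⬝ᵥ (G *ᵥ x)| ≤ c * (x ⬝ᵥ x) := by
  have hχpos : ∀ i, 0 < χ i := by
    intro i
    rw [hχ]
    refine mul_pos (hw i) (mul_pos (inv_pos.mpr (Real.sqrt_pos.mpr ?_)) (Real.exp_pos _))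
    have := hS.det_pos
    positivity
  have hpz : p z = ∑ i, χ i := by rw [hp, hχ]
  -- quadratic form formula
  have key : x ⬝ᵥ (G *ᵥ x) =
      ((p z) ^ 2)⁻¹ * ∑ i, ∑ j ∈ Finset.univ.filter (fun j => i < j),
        (χ i * χ j) * (v i j ⬝ᵥ x) ^ 2 := by
    rw [hG, smul_mulVec, dotProduct_smul, smul_eq_mul, dot_sum_mulVec']
    congr 1
    refine Finset.sum_congr rfl fun i _ => ?_
    rw [dot_sum_mulVec']
    refine Finset.sum_congr rfl fun j _ => ?_
    rw [smul_mulVec, dotProduct_smul, smul_eq_mul, dot_vecMulVec']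
  set s := ((p z) ^ 2)⁻¹ with hs
  have hs0 : 0 ≤ s := by positivity
  have hxx : 0 ≤ x ⬝ᵥ x := by
    simp only [dotProduct]
    exact Finset.sum_nonneg fun a _ => mul_self_nonneg _
  -- nonnegativity of inner sum
  have hT0 : 0 ≤ ∑ i, ∑ j ∈ Finset.univ.filter (fun j => i < j),
      (χ i * χ j) * (v i j ⬝ᵥ x) ^ 2 :=
    Finset.sum_nonneg fun i _ => Finset.sum_nonneg fun j _ =>
      mul_nonneg (mul_nonneg (hχpos i).le (hχpos j).le) (sq_nonneg _)
  have h0 : 0 ≤ x ⬝ᵥ (G *ᵥ x) := by rw [key]; exact mul_nonneg hs0 hT0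
  -- Cauchy-Schwarz per term
  have hCS : ∀ i j, (v i j ⬝ᵥ x) ^ 2 ≤ c * (x ⬝ᵥ x) := by
    intro i j
    calc (v i j ⬝ᵥ x) ^ 2 ≤ (∑ a, (v i j a) ^ 2) * ∑ a, (x a) ^ 2 :=
          Finset.sum_mul_sq_le_sq_mul_sq _ _ _
      _ ≤ c * (x ⬝ᵥ x) := by
          refine mul_le_mul ?_ ?_ (Finset.sum_nonneg fun a _ => sq_nonneg _) hc.le
          · have := hbound i j
            simpa [dotProduct, pow_two] using this
          · simp [dotProduct, pow_two]
  -- pair sum bound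
  have hpair : ∑ i, ∑ j ∈ Finset.univ.filter (fun j => i < j), χ i * χ j ≤ (p z) ^ 2 := by
    rw [hpz, pow_two, Finset.sum_mul_sum]
    refine Finset.sum_le_sum fun i _ => ?_
    refine Finset.sum_le_sum_of_subset_of_nonneg (Finset.filter_subset _ _) ?_
    exact fun j _ _ => mul_nonneg (hχpos i).le (hχpos j).le
  have hup : x ⬝ᵥ (G *ᵥ x) ≤ c * (x ⬝ᵥ x) := by
    rw [key]
    have hT : ∑ i, ∑ j ∈ Finset.univ.filter (fun j => i < j),
        (χ i * χ j) * (v i j ⬝ᵥ x) ^ 2 ≤ (p z) ^ 2 * (c * (x ⬝ᵥ x)) := by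
      calc ∑ i, ∑ j ∈ Finset.univ.filter (fun j => i < j),
            (χ i * χ j) * (v i j ⬝ᵥ x) ^ 2
          ≤ ∑ i, ∑ j ∈ Finset.univ.filter (fun j => i < j),
            (χ i * χ j) * (c * (x ⬝ᵥ x)) := by
            refine Finset.sum_le_sum fun i _ => Finset.sum_le_sum fun j _ => ?_
            exact mul_le_mul_of_nonneg_left (hCS i j)
              (mul_nonneg (hχpos i).le (hχpos j).le)
        _ = (∑ i, ∑ j ∈ Finset.univ.filter (fun j => i < j), χ i * χ j) * (c * (x ⬝ᵥ x)) := by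
            simp [Finset.sum_mul]
        _ ≤ (p z) ^ 2 * (c * (x ⬝ᵥ x)) :=
            mul_le_mul_of_nonneg_right hpair (mul_nonneg hc.le hxx)
    calc s * ∑ i, ∑ j ∈ Finset.univ.filter (fun j => i < j),
          (χ i * χ j) * (v i j ⬝ᵥ x) ^ 2
        ≤ s * ((p z) ^ 2 * (c * (x ⬝ᵥ x))) := mul_le_mul_of_nonneg_left hT hs0
      _ = (s * (p z) ^ 2) * (c * (x ⬝ᵥ x)) := by ring
      _ ≤ 1 * (c * (x ⬝ᵥ x)) := by
          refine mul_le_mul_of_nonneg_right ?_ (mul_nonneg hc.le hxx)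
          rw [hs]
          rcases eq_or_ne ((p z) ^ 2) 0 with h | h
          · simp [h]
          · rw [inv_mul_cancel₀ h]
      _ = c * (x ⬝ᵥ x) := one_mul _
  exact ⟨⟨h0, hup⟩, by rw [abs_of_nonneg h0]; exact hup⟩
end
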